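/- Let Ψ be a root datum with finite automorphism group Γ stabilizing a base Δ, and suppose β, β′ ∈ Φ are distinct roots with i*(β) = i*(β′). Then β′ − β is not a root of Φ, and ⟨β′, β^∨⟩ ≤ 0. -/

import Mathlib

open scoped BigOperators Classical

/-- A (not necessarily reduced) root datum `Ψ = (X*, Φ, X_*, Φ^∨)`:
dual lattices `X`, `Y` in perfect duality, a finite set of roots, and a
coroot map satisfying the usual axioms. -/
structure ZRootDatum (X Y : Type) [AddCommGroup X] [AddCommGroup Y] : Type where
  pair : X →+ Y →+ ℤ
  perfect : Function.Bijective fun x : X => pair x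
  perfect' : Function.Bijective fun y : Y => pair.flip y
  roots : Finset X
  coroot : X → Y
  pair_self : ∀ β ∈ roots, pair β (coroot β) = 2
  reflect_mem : ∀ β ∈ roots, ∀ x ∈ roots, x - pair x (coroot β) • β ∈ roots
  coreflect_mem : ∀ β ∈ roots, ∀ β' ∈ roots,
    ∃ β'' ∈ roots, coroot β' - pair β (coroot β') • coroot β = coroot β''

/-- The multiplicative group structure that `AddAut M` carried in older Mathlib
(composition as multiplication); current Mathlib makes `AddAut M` an additive group. -/
instance AddAut.instGroupOld {M : Type} [Add M] : Group (AddAut M) where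
  mul g h := AddEquiv.trans h g
  one := AddEquiv.refl _
  inv := AddEquiv.symm
  mul_assoc _ _ _ := rfl
  one_mul _ := rfl
  mul_one _ := rfl
  inv_mul_cancel := AddEquiv.self_trans_symm

variable {X Y Γ : Type} [AddCommGroup X] [AddCommGroup Y] [Group Γ]

/-- The Weyl group of a root datum: the subgroup of `Aut(X)` generated by the
reflections `w_β : x ↦ x - ⟨x, β^∨⟩β` through the roots. -/
def ZRootDatum.weylGroup (Ψ : ZRootDatum X Y) : Subgroup (AddAut X) :=
  Subgroup.closure {w : AddAut X | ∃ β ∈ Ψ.roots, ∀ x, w x = x - Ψ.pair x (Ψ.coroot β) • β}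

/-- `Δ` is a base (system of simple roots) of the root datum. -/
def ZRootDatum.IsBase (Ψ : ZRootDatum X Y) (Δ : Finset X) : Prop :=
  (↑Δ : Set X) ⊆ ↑Ψ.roots ∧
  LinearIndependent ℤ (fun a : ↥(↑Δ : Set X) => (a : X)) ∧
  ∀ β ∈ Ψ.roots, ∃ c : X → ℤ,
    β = ∑ a ∈ Δ, c a • a ∧ ((∀ a ∈ Δ, 0 ≤ c a) ∨ (∀ a ∈ Δ, c a ≤ 0))

/-- A group `Γ` acting (via `ρ` on `X*` and `ρ'` on `X_*`) by automorphisms of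
the root datum `Ψ`. -/
structure RDAction (Ψ : ZRootDatum X Y) (ρ : Γ →* AddAut X) (ρ' : Γ →* AddAut Y) : Prop where
  pair_eq : ∀ γ x y, Ψ.pair (ρ γ x) (ρ' γ y) = Ψ.pair x y
  root_mem : ∀ γ, ∀ β ∈ Ψ.roots, ρ γ β ∈ Ψ.roots
  coroot_eq : ∀ γ, ∀ β ∈ Ψ.roots, Ψ.coroot (ρ γ β) = ρ' γ (Ψ.coroot β)

/-- The norm map `N : x ↦ ∑_{γ ∈ Γ} γ·x`.  For a free lattice `X`, its kernel
is exactly the kernel of the projection of `X` onto the coinvariants `X_Γ`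
modulo torsion. -/
noncomputable def normMap [Fintype Γ] (ρ : Γ →* AddAut X) : X →+ X :=
  ∑ γ : Γ, ((ρ γ : X ≃+ X) : X →+ X)

/-- The projection `i* : X* → X̄*` onto the coinvariant lattice modulo torsion. -/
noncomputable def istar [Fintype Γ] (ρ : Γ →* AddAut X) : X →+ X ⧸ (normMap ρ).ker :=
  QuotientAddGroup.mk' (normMap ρ).ker


/-!
Since `Γ` permutes the base `Δ`, an integer combination of `Δ` killed by the norm map has
coefficient sum `0`; as the coefficients of a root all have one sign, no root is killed by the norm
map, whereas `β' - β` is. So `β' - β` is not a root, which rules out `⟨β', β^∨⟩ = 1` (via `s_β`)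
and `⟨β, β'^∨⟩ = 1` (via `s_β'` and `Φ = -Φ`). If `⟨β', β^∨⟩ ≥ 2` and `⟨β, β'^∨⟩ ≠ 1`, the orbit
of `β'` under `s_β s_β'` is infinite, contradicting the finiteness of `Φ`: the orbit satisfies the
linear recurrence with trace `⟨β', β^∨⟩⟨β, β'^∨⟩ - 2`, so its pairings with `β^∨` grow in absolute
value, except when both Cartan integers are `2` and the orbit is the progression
`β' + 2n(β - β')` in the torsion-free lattice `X`.
-/

theorem abs_strictMono_of_recurrence {R : Type*} [CommRing R] [LinearOrder R]
    [IsStrictOrderedRing R] {x : ℕ → R} {t : R} (ht : 2 ≤ |t|) (h01 : |x 0| < |x 1|)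
    (hrec : ∀ n, x (n + 2) = t * x (n + 1) - x n) : StrictMono fun n ↦ |x n| := by
  refine strictMono_nat_of_lt_succ fun n ↦ ?_
  induction n with
  | zero => exact h01
  | succ n ih =>
    have : 2 * |x (n + 1)| - |x n| ≤ |x (n + 2)| := calc
      2 * |x (n + 1)| - |x n| ≤ |t| * |x (n + 1)| - |x n| := by gcongr
      _ ≤ |x (n + 2)| := by rw [hrec, ← abs_mul]; exact abs_sub_abs_le_abs_sub _ _
    show |x (n + 1)| < |x (n + 2)|
    linarith

theorem eq_add_zsmul_of_recurrence {A : Type*} [AddCommGroup A] {r : ℕ → A}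
    (hrec : ∀ n, r (n + 2) = (2 : ℤ) • r (n + 1) - r n) (n : ℕ) :
    r n = r 0 + (n : ℤ) • (r 1 - r 0) := by
  suffices r n = r 0 + (n : ℤ) • (r 1 - r 0) ∧ r (n + 1) = r 0 + (n + 1 : ℤ) • (r 1 - r 0) from
    this.1
  induction n with
  | zero => simp
  | succ n ih =>
    refine ⟨mod_cast ih.2, ?_⟩
    rw [hrec, ih.1, ih.2]
    push_cast
    module

namespace ZRootDatum

theorem isAddTorsionFree (Ψ : ZRootDatum X Y) : IsAddTorsionFree X := by
  refine ⟨fun n hn x y hxy ↦ Ψ.perfect.1 ?_⟩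
  ext z
  simpa [hn] using congr(Ψ.pair $hxy z)

variable (Ψ : ZRootDatum X Y)

theorem zero_notMem_roots : 0 ∉ Ψ.roots := fun h ↦ by simpa using Ψ.pair_self 0 h

variable {Ψ}

theorem neg_mem_roots {β : X} (hβ : β ∈ Ψ.roots) : -β ∈ Ψ.roots := by
  simpa [Ψ.pair_self β hβ, two_smul] using Ψ.reflect_mem β hβ β hβ

theorem sub_mem_roots_of_pairing_eq_one {β β' : X} (hβ : β ∈ Ψ.roots) (hβ' : β' ∈ Ψ.roots)
    (h : Ψ.pair β' (Ψ.coroot β) = 1) : β' - β ∈ Ψ.roots := by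
  simpa [h] using Ψ.reflect_mem β hβ β' hβ'

variable (Ψ)

def reflection (β : X) : AddMonoid.End X :=
  AddMonoidHom.id X - (zmultiplesHom X β).comp (Ψ.pair.flip (Ψ.coroot β))

@[simp]
theorem reflection_apply (β x : X) : Ψ.reflection β x = x - Ψ.pair x (Ψ.coroot β) • β := rfl

def coxeterOrbit (β β' : X) (n : ℕ) : X :=
  ((Ψ.reflection β * Ψ.reflection β') ^ n) β'

variable {Ψ} {β β' : X}

@[simp]
theorem coxeterOrbit_zero : Ψ.coxeterOrbit β β' 0 = β' := rfl

theorem coxeterOrbit_mem (hβ : β ∈ Ψ.roots) (hβ' : β' ∈ Ψ.roots) (n : ℕ) :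
    Ψ.coxeterOrbit β β' n ∈ Ψ.roots := by
  induction n with
  | zero => exact hβ'
  | succ n ih =>
    rw [coxeterOrbit, pow_succ']
    exact Ψ.reflect_mem β hβ _ (Ψ.reflect_mem β' hβ' _ ih)

theorem coxeterOrbit_one (hβ' : β' ∈ Ψ.roots) :
    Ψ.coxeterOrbit β β' 1 = Ψ.pair β' (Ψ.coroot β) • β - β' := by
  simp only [coxeterOrbit, pow_one, AddMonoid.End.coe_mul, Function.comp_apply, reflection_apply,
    Ψ.pair_self β' hβ', map_sub, map_zsmul]
  module

theorem coxeterOrbit_add_two (hβ : β ∈ Ψ.roots) (hβ' : β' ∈ Ψ.roots) (n : ℕ) :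
    Ψ.coxeterOrbit β β' (n + 2) =
      (Ψ.pair β' (Ψ.coroot β) * Ψ.pair β (Ψ.coroot β') - 2) • Ψ.coxeterOrbit β β' (n + 1) -
        Ψ.coxeterOrbit β β' n := by
  set w : AddMonoid.End X := Ψ.reflection β * Ψ.reflection β'
  have hw : w (w β') =
      (Ψ.pair β' (Ψ.coroot β) * Ψ.pair β (Ψ.coroot β') - 2) • w β' - β' := by
    simp only [w, AddMonoid.End.coe_mul, Function.comp_apply, reflection_apply, map_sub, map_zsmul,
      Ψ.pair_self β hβ, Ψ.pair_self β' hβ']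
    module
  have hpow (k : ℕ) (x : X) : (w ^ (k + 1)) x = (w ^ k) (w x) := by rw [pow_succ]; rfl
  change (w ^ (n + 2)) β' = _ • (w ^ (n + 1)) β' - (w ^ n) β'
  rw [hpow (n + 1), hpow n, hw, map_sub, map_zsmul, hpow n]

theorem coxeterOrbit_injective_of_pairing_eq_two (hβ : β ∈ Ψ.roots) (hβ' : β' ∈ Ψ.roots)
    (hne : β ≠ β') (hp : Ψ.pair β' (Ψ.coroot β) = 2) (hq : Ψ.pair β (Ψ.coroot β') = 2) :
    Function.Injective (Ψ.coxeterOrbit β β') := by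
  have hrec (n : ℕ) : Ψ.coxeterOrbit β β' (n + 2) =
      (2 : ℤ) • Ψ.coxeterOrbit β β' (n + 1) - Ψ.coxeterOrbit β β' n := by
    rw [coxeterOrbit_add_two hβ hβ', hp, hq]
    norm_num
  have hd : Ψ.coxeterOrbit β β' 1 - Ψ.coxeterOrbit β β' 0 = (2 : ℤ) • (β - β') := by
    rw [coxeterOrbit_one hβ', coxeterOrbit_zero, hp]
    module
  have := Ψ.isAddTorsionFree
  intro j k hjk
  rw [eq_add_zsmul_of_recurrence hrec, eq_add_zsmul_of_recurrence hrec k, add_right_inj,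
    ← sub_eq_zero, ← sub_smul, hd, IsAddTorsionFree.zsmul_eq_zero_iff_left] at hjk
  · omega
  · simpa [sub_eq_zero] using hne

theorem strictMono_abs_pairing_coxeterOrbit_succ (hβ : β ∈ Ψ.roots) (hβ' : β' ∈ Ψ.roots)
    (hp : 0 < Ψ.pair β' (Ψ.coroot β))
    (hpq : Ψ.pair β' (Ψ.coroot β) * Ψ.pair β (Ψ.coroot β') ≤ 0 ∨
      5 ≤ Ψ.pair β' (Ψ.coroot β) * Ψ.pair β (Ψ.coroot β')) :
    StrictMono fun n ↦ |Ψ.pair (Ψ.coxeterOrbit β β' (n + 1)) (Ψ.coroot β)| := by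
  set p := Ψ.pair β' (Ψ.coroot β) with hp_def
  set q := Ψ.pair β (Ψ.coroot β') with hq_def
  have hx0 : Ψ.pair (Ψ.coxeterOrbit β β' 1) (Ψ.coroot β) = p := by
    simp only [coxeterOrbit_one hβ', ← hp_def, map_sub, map_zsmul, AddMonoidHom.sub_apply,
      AddMonoidHom.smul_apply, Ψ.pair_self β hβ]
    ring
  have hx1 : Ψ.pair (Ψ.coxeterOrbit β β' 2) (Ψ.coroot β) = (p * q - 3) * p := by
    simp only [coxeterOrbit_add_two hβ hβ' 0, ← hp_def, ← hq_def, zero_add, coxeterOrbit_one hβ',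
      coxeterOrbit_zero, map_sub, map_zsmul, AddMonoidHom.sub_apply, AddMonoidHom.smul_apply,
      Ψ.pair_self β hβ]
    ring
  refine abs_strictMono_of_recurrence (t := p * q - 2) (le_abs.mpr (by omega)) ?_ fun n ↦ ?_
  · rw [hx0, hx1, abs_mul]
    exact lt_mul_of_one_lt_left (abs_pos.mpr hp.ne') (lt_abs.mpr (by omega))
  · simp [coxeterOrbit_add_two hβ hβ' (n + 1), ← hp_def, ← hq_def]

theorem pairing_eq_one_of_two_le_pairing (hβ : β ∈ Ψ.roots) (hβ' : β' ∈ Ψ.roots) (hne : β ≠ β')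
    (hp : 2 ≤ Ψ.pair β' (Ψ.coroot β)) : Ψ.pair β (Ψ.coroot β') = 1 := by
  set p := Ψ.pair β' (Ψ.coroot β)
  set q := Ψ.pair β (Ψ.coroot β')
  by_contra hq
  suffices Function.Injective fun n ↦ Ψ.coxeterOrbit β β' (n + 1) from
    Set.infinite_of_injective_forall_mem this (fun n ↦ coxeterOrbit_mem hβ hβ' _)
      Ψ.roots.finite_toSet
  obtain ⟨hp2, hq2⟩ | hpq : (p = 2 ∧ q = 2) ∨ (p * q ≤ 0 ∨ 5 ≤ p * q) := by
    rcases (show q ≤ 0 ∨ (p = 2 ∧ q = 2) ∨ 3 ≤ p ∧ 2 ≤ q ∨ 3 ≤ q by omega) with h | h | h | h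
    · exact .inr (.inl (by nlinarith))
    · exact .inl h
    · exact .inr (.inr (by nlinarith))
    · exact .inr (.inr (by nlinarith))
  · exact (coxeterOrbit_injective_of_pairing_eq_two hβ hβ' hne hp2 hq2).comp (add_left_injective 1)
  · exact Function.Injective.of_comp (f := fun y ↦ |Ψ.pair y (Ψ.coroot β)|)
      (strictMono_abs_pairing_coxeterOrbit_succ hβ hβ' (by omega) hpq).injective

end ZRootDatum

section Coinvariants

variable (ρ : Γ →* AddAut X)

theorem apply_map_inv_apply (γ : Γ) (x : X) : ρ γ (ρ γ⁻¹ x) = x := by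
  rw [map_inv]
  exact (ρ γ).apply_symm_apply x

theorem map_inv_apply_apply (γ : Γ) (x : X) : ρ γ⁻¹ (ρ γ x) = x := by
  rw [map_inv]
  exact (ρ γ).symm_apply_apply x

theorem normMap_apply [Fintype Γ] (x : X) : normMap ρ x = ∑ γ, ρ γ x := by
  simp [normMap]

variable {ρ} {Δ : Finset X}

theorem sum_comp_apply_eq_sum {M : Type*} [AddCommMonoid M] (hstab : ∀ γ : Γ, ∀ a ∈ Δ, ρ γ a ∈ Δ)
    (γ : Γ) (f : X → M) : ∑ a ∈ Δ, f (ρ γ a) = ∑ a ∈ Δ, f a :=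
  Finset.sum_nbij' (ρ γ) (ρ γ⁻¹) (hstab γ) (hstab γ⁻¹) (fun a _ ↦ map_inv_apply_apply ρ γ a)
    (fun b _ ↦ apply_map_inv_apply ρ γ b) fun _ _ ↦ rfl

variable [Fintype Γ]

theorem normMap_sum_zsmul (hstab : ∀ γ : Γ, ∀ a ∈ Δ, ρ γ a ∈ Δ) (d : X → ℤ) :
    normMap ρ (∑ a ∈ Δ, d a • a) = ∑ b ∈ Δ, (∑ γ, d (ρ γ⁻¹ b)) • b := by
  have hγ (γ : Γ) : ρ γ (∑ a ∈ Δ, d a • a) = ∑ b ∈ Δ, d (ρ γ⁻¹ b) • b := by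
    rw [map_sum, ← sum_comp_apply_eq_sum hstab γ fun b ↦ d (ρ γ⁻¹ b) • b]
    simp only [map_zsmul, map_inv_apply_apply]
  simp only [normMap_apply, hγ, Finset.sum_smul]
  exact Finset.sum_comm

theorem sum_eq_zero_of_normMap_eq_zero (hind : LinearIndepOn ℤ id (Δ : Set X))
    (hstab : ∀ γ : Γ, ∀ a ∈ Δ, ρ γ a ∈ Δ) {d : X → ℤ} (hd : normMap ρ (∑ a ∈ Δ, d a • a) = 0) :
    ∑ a ∈ Δ, d a = 0 := by
  rw [normMap_sum_zsmul hstab] at hd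
  have hcoeff := linearIndepOn_finset_iff.mp hind _ hd
  have : Fintype.card Γ • ∑ a ∈ Δ, d a = 0 := calc
    Fintype.card Γ • ∑ a ∈ Δ, d a = ∑ γ : Γ, ∑ a ∈ Δ, d (ρ γ⁻¹ a) := by
      simp only [sum_comp_apply_eq_sum hstab, Finset.sum_const, Finset.card_univ]
    _ = 0 := by
      rw [Finset.sum_comm]
      exact Finset.sum_eq_zero hcoeff
  simpa using this

theorem normMap_ne_zero_of_mem_roots {Ψ : ZRootDatum X Y} (hΔ : Ψ.IsBase Δ)
    (hstab : ∀ γ : Γ, ∀ a ∈ Δ, ρ γ a ∈ Δ) {β : X} (hβ : β ∈ Ψ.roots) : normMap ρ β ≠ 0 := by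
  intro hN
  obtain ⟨c, rfl, hsign⟩ := hΔ.2.2 β hβ
  have hsum := sum_eq_zero_of_normMap_eq_zero hΔ.2.1 hstab hN
  have hc : ∀ a ∈ Δ, c a = 0 := hsign.elim (Finset.sum_eq_zero_iff_of_nonneg · |>.mp hsum)
    (Finset.sum_eq_zero_iff_of_nonpos · |>.mp hsum)
  rw [Finset.sum_eq_zero fun a ha ↦ by rw [hc a ha, zero_smul]] at hβ
  exact Ψ.zero_notMem_roots hβ

end Coinvariants

theorem sub_not_root_and_pairing_nonpos_general
    [Fintype Γ]
    (Ψ : ZRootDatum X Y) (ρ : Γ →* AddAut X)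
    (Δ : Finset X) (hΔ : Ψ.IsBase Δ)
    (hstab : ∀ γ : Γ, ∀ a ∈ Δ, ρ γ a ∈ Δ)
    (β β' : X) (hβ : β ∈ Ψ.roots) (hβ' : β' ∈ Ψ.roots)
    (hne : β ≠ β') (heq : istar ρ β = istar ρ β') :
    β' - β ∉ Ψ.roots ∧ Ψ.pair β' (Ψ.coroot β) ≤ 0 := by
  have hN : normMap ρ (β' - β) = 0 := by
    rw [← neg_add_eq_sub]
    exact QuotientAddGroup.eq.mp heq
  have hsub : β' - β ∉ Ψ.roots := fun h ↦ normMap_ne_zero_of_mem_roots hΔ hstab h hN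
  refine ⟨hsub, not_lt.mp fun hpos ↦ ?_⟩
  obtain hp | hp : Ψ.pair β' (Ψ.coroot β) = 1 ∨ 2 ≤ Ψ.pair β' (Ψ.coroot β) := by omega
  · exact hsub (ZRootDatum.sub_mem_roots_of_pairing_eq_one hβ hβ' hp)
  · have hq := ZRootDatum.pairing_eq_one_of_two_le_pairing hβ hβ' hne hp
    exact hsub (by simpa only [neg_sub] using
      ZRootDatum.neg_mem_roots (ZRootDatum.sub_mem_roots_of_pairing_eq_one hβ' hβ hq))

/-- Let `Ψ` be a root datum with finite automorphism group `Γ`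
stabilizing a base `Δ`, and suppose `β, β' ∈ Φ` are distinct roots with
`i*(β) = i*(β')`.  Then `β' - β` is not a root of `Φ`, and `⟨β', β^∨⟩ ≤ 0`. -/
theorem sub_not_root_and_pairing_nonpos
    [Fintype Γ] [Module.Free ℤ X] [Module.Finite ℤ X]
    (Ψ : ZRootDatum X Y) (ρ : Γ →* AddAut X) (ρ' : Γ →* AddAut Y)
    (hact : RDAction Ψ ρ ρ') (Δ : Finset X) (hΔ : Ψ.IsBase Δ)
    (hstab : ∀ γ : Γ, ∀ a ∈ Δ, ρ γ a ∈ Δ)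
    (β β' : X) (hβ : β ∈ Ψ.roots) (hβ' : β' ∈ Ψ.roots)
    (hne : β ≠ β') (heq : istar ρ β = istar ρ β') :
    β' - β ∉ Ψ.roots ∧ Ψ.pair β' (Ψ.coroot β) ≤ 0 :=
  sub_not_root_and_pairing_nonpos_general Ψ ρ Δ hΔ hstab β β' hβ hβ' hne heq
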